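/- (de Caen's inequality) For any finite collection of events B_1, ..., B_m in a probability space with each P(B_i) > 0, the probability of their union satisfies P(⋃_i B_i) ≥ Σ_i P(B_i)² / (Σ_j P(B_i ∩ B_j)). -/

import Mathlib

open MeasureTheory Finset
open scoped ENNReal

/-- de Caen's inequality: for events `B 1, ..., B m` with positive probability,
`P(⋃ i, B i) ≥ ∑ i, P(B i)² / (∑ j, P(B i ∩ B j))`. -/
theorem stmt6 {Ω : Type*} [MeasurableSpace Ω] (P : Measure Ω) [IsProbabilityMeasure P]
    (m : ℕ) (B : Fin m → Set Ω) (hB : ∀ i, MeasurableSet (B i))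
    (hpos : ∀ i, 0 < P (B i)) :
    (P (⋃ i, B i)).toReal ≥
      ∑ i, (P (B i)).toReal ^ 2 / ∑ j, (P (B i ∩ B j)).toReal := by
  classical
  -- N ω = number of sets containing ω, as an ℝ≥0∞-valued function
  set N : Ω → ℝ≥0∞ := fun ω => ∑ j, (B j).indicator 1 ω with hN
  have hNmeas : Measurable N := by
    apply Finset.measurable_sum
    intro j _
    exact Measurable.indicator measurable_const (hB j)
  have hNle : ∀ ω, N ω ≤ (m : ℝ≥0∞) := by
    intro ω
    calc N ω ≤ ∑ _j : Fin m, 1 := by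
          apply Finset.sum_le_sum
          intro j _
          by_cases h : ω ∈ B j <;> simp [Set.indicator, h]
      _ = (m : ℝ≥0∞) := by simp
  have hNtop : ∀ ω, N ω ≠ ∞ := fun ω => ne_top_of_le_ne_top (by simp) (hNle ω)
  have hNpos : ∀ i, ∀ ω ∈ B i, 1 ≤ N ω := by
    intro i ω hω
    calc (1 : ℝ≥0∞) = (B i).indicator 1 ω := by simp [Set.indicator, hω]
      _ ≤ N ω := Finset.single_le_sum (f := fun j => (B j).indicator 1 ω)
          (fun j _ => zero_le) (Finset.mem_univ i)
  have hNne : ∀ i, ∀ ω ∈ B i, N ω ≠ 0 := fun i ω hω => by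
    intro h; exact absurd (h ▸ hNpos i ω hω) (by simp)
  -- denominator D i
  set D : Fin m → ℝ≥0∞ := fun i => ∑ j, P (B i ∩ B j) with hD
  have hDN : ∀ i, D i = ∫⁻ ω in B i, N ω ∂P := by
    intro i
    rw [lintegral_finset_sum]
    · apply Finset.sum_congr rfl
      intro j _
      rw [lintegral_indicator_one (hB j),
        Measure.restrict_apply (hB j), Set.inter_comm]
    · intro j _
      exact Measurable.indicator measurable_const (hB j)
  have hDpos : ∀ i, D i ≠ 0 := by
    intro i h
    have : P (B i ∩ B i) = 0 := by
      have := Finset.sum_eq_zero_iff.mp h i (Finset.mem_univ i)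
      exact this
    rw [Set.inter_self] at this
    exact absurd this (hpos i).ne'
  have hDtop : ∀ i, D i ≠ ∞ := by
    intro i
    refine ne_top_of_le_ne_top (b := (m : ℝ≥0∞)) (by simp) ?_
    calc D i ≤ ∑ _j : Fin m, 1 :=
        Finset.sum_le_sum fun j _ => prob_le_one
      _ = (m : ℝ≥0∞) := by simp
  -- Cauchy–Schwarz step
  have key : ∀ i, P (B i) ^ 2 / D i ≤ ∫⁻ ω in B i, (N ω)⁻¹ ∂P := by
    intro i
    rw [ENNReal.div_le_iff (hDpos i) (hDtop i)]
    have CS : P (B i) ≤ (∫⁻ ω in B i, N ω ∂P) ^ (1/2 : ℝ) *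
        (∫⁻ ω in B i, (N ω)⁻¹ ∂P) ^ (1/2 : ℝ) := by
      have h1 : P (B i) = ∫⁻ ω in B i,
          ((fun ω => N ω ^ (1/2 : ℝ)) * fun ω => N ω ^ (-(1/2) : ℝ)) ω ∂P := by
        rw [setLIntegral_congr_fun (hB i) ?_]
        · rw [setLIntegral_one]
        · intro ω hω
          show N ω ^ (1/2 : ℝ) * N ω ^ (-(1/2) : ℝ) = 1
          rw [← ENNReal.rpow_add _ _ (hNne i ω hω) (hNtop ω)]
          norm_num
      rw [h1]
      have := ENNReal.lintegral_mul_le_Lp_mul_Lq (P.restrict (B i))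
        (Real.HolderConjugate.two_two : Real.HolderConjugate 2 2) (f := fun ω => N ω ^ (1/2 : ℝ))
        (g := fun ω => N ω ^ (-(1/2) : ℝ))
        ((hNmeas.pow_const _).aemeasurable) ((hNmeas.pow_const _).aemeasurable)
      refine this.trans_eq ?_
      congr 1
      · congr 1
        apply lintegral_congr
        intro ω
        show (N ω ^ (1/2:ℝ)) ^ (2:ℝ) = N ω
        rw [← ENNReal.rpow_mul]
        norm_num
      · congr 1
        apply lintegral_congr
        intro ω
        show (N ω ^ (-(1/2):ℝ)) ^ (2:ℝ) = (N ω)⁻¹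
        rw [← ENNReal.rpow_mul]
        norm_num [ENNReal.rpow_neg_one]
    calc P (B i) ^ 2 ≤ ((∫⁻ ω in B i, N ω ∂P) ^ (1/2 : ℝ) *
          (∫⁻ ω in B i, (N ω)⁻¹ ∂P) ^ (1/2 : ℝ)) ^ 2 :=
        pow_le_pow_left' CS 2
      _ = (∫⁻ ω in B i, N ω ∂P) * (∫⁻ ω in B i, (N ω)⁻¹ ∂P) := by
          rw [mul_pow, ← ENNReal.rpow_natCast ((∫⁻ ω in B i, N ω ∂P) ^ (1/2:ℝ)) 2,
            ← ENNReal.rpow_natCast ((∫⁻ ω in B i, (N ω)⁻¹ ∂P) ^ (1/2:ℝ)) 2,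
            ← ENNReal.rpow_mul, ← ENNReal.rpow_mul]
          norm_num
      _ = (∫⁻ ω in B i, (N ω)⁻¹ ∂P) * D i := by rw [hDN i, mul_comm]
  -- summing the reciprocals gives the union
  have hsum : ∑ i, ∫⁻ ω in B i, (N ω)⁻¹ ∂P = P (⋃ i, B i) := by
    have : ∀ i : Fin m, ∫⁻ ω in B i, (N ω)⁻¹ ∂P
        = ∫⁻ ω, (B i).indicator (fun ω => (N ω)⁻¹) ω ∂P := by
      intro i; rw [lintegral_indicator (hB i)]
    rw [Finset.sum_congr rfl fun i _ => this i, ← lintegral_finset_sum]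
    · have hpt : ∀ ω, ∑ i, (B i).indicator (fun ω => (N ω)⁻¹) ω
          = (⋃ i, B i).indicator 1 ω := by
        intro ω
        by_cases h : ω ∈ ⋃ i, B i
        · obtain ⟨i, hi⟩ := Set.mem_iUnion.mp h
          have h0 := hNne i ω hi
          have ht := hNtop ω
          calc ∑ j, (B j).indicator (fun ω => (N ω)⁻¹) ω
              = ∑ j, (B j).indicator 1 ω * (N ω)⁻¹ := by
                apply Finset.sum_congr rfl
                intro j _
                by_cases hj : ω ∈ B j <;> simp [Set.indicator, hj]
            _ = N ω * (N ω)⁻¹ := by rw [← Finset.sum_mul]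
            _ = 1 := ENNReal.mul_inv_cancel h0 ht
            _ = (⋃ i, B i).indicator 1 ω := by simp [Set.indicator, h]
        · have h' : ∀ j : Fin m, ω ∉ B j := by
            intro j hj; exact h (Set.mem_iUnion.mpr ⟨j, hj⟩)
          simp [Set.indicator, h, h']
      rw [lintegral_congr hpt,
        lintegral_indicator_one (MeasurableSet.iUnion fun i => hB i)]
    · intro i _
      exact Measurable.indicator (hNmeas.inv) (hB i)
  -- main ENNReal inequality
  have main : ∑ i, P (B i) ^ 2 / D i ≤ P (⋃ i, B i) := by
    calc ∑ i, P (B i) ^ 2 / D i ≤ ∑ i, ∫⁻ ω in B i, (N ω)⁻¹ ∂P :=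
        Finset.sum_le_sum fun i _ => key i
      _ = P (⋃ i, B i) := hsum
  -- convert to reals
  have hterm_top : ∀ i : Fin m, P (B i) ^ 2 / D i ≠ ∞ := by
    intro i
    exact (ENNReal.div_lt_top (ENNReal.pow_ne_top (measure_ne_top P _)) (hDpos i)).ne
  have hRHS : ∑ i, (P (B i)).toReal ^ 2 / ∑ j, (P (B i ∩ B j)).toReal
      = (∑ i, P (B i) ^ 2 / D i).toReal := by
    rw [ENNReal.toReal_sum (fun i _ => hterm_top i)]
    apply Finset.sum_congr rfl
    intro i _
    rw [ENNReal.toReal_div, ENNReal.toReal_pow,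
      ENNReal.toReal_sum (fun j _ => by finiteness)]
  rw [ge_iff_le, hRHS]
  exact ENNReal.toReal_mono (by finiteness) main
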